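/- arXiv:2602.11373 — 2 statements merged into one kernel-verified Lean document; each statement's English description precedes it below -/
import Mathlib

section
/- Let τ_M > 0, τ_T > 0 and a_M ≥ a_T > 0 with a_M·τ_T ≥ a_T·τ_M (i.e., the pursuer has maneuverability ratio μ = a_M/a_T ≥ 1 and agility ratio μ·ε = (a_M·τ_T)/(a_T·τ_M) ≥ 1). Then for every t ≥ 0 the singular-region boundary is nonnegative: ∂Z*(t) = a_M·τ_M²·Υ(t/τ_M) − a_T·τ_T²·Υ(t/τ_T) ≥ 0. -/
/-- Υ(θ) = θ²/2 − exp(−θ) − θ + 1 -/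
noncomputable def Upsilon (θ : ℝ) : ℝ := θ ^ 2 / 2 - Real.exp (-θ) - θ + 1

/-- The singular-region boundary ∂Z*(s) = a_M·τ_M²·Υ(s/τ_M) − a_T·τ_T²·Υ(s/τ_T). -/
noncomputable def singBdry (aM aT τM τT s : ℝ) : ℝ :=
  aM * τM ^ 2 * Upsilon (s / τM) - aT * τT ^ 2 * Upsilon (s / τT)

/-! Since `Υ(0) = Υ'(0) = 0` and `Υ'' = 1 - e^{-x}`, one gets `2Υ ≤ x Υ' ≤ 3Υ` on `x ≥ 0`, so
`Υ(x)/x²` increases and `Υ(x)/x³` decreases on `x > 0`. As `τⁿ Υ(t/τ) = tⁿ · Υ(x)/xⁿ` with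
`x = t/τ`, the quantity `τ² Υ(t/τ)` decreases and `τ³ Υ(t/τ)` increases in `τ`. If `τ_M ≤ τ_T`
the first fact and `a_T ≤ a_M` give the claim; if `τ_T ≤ τ_M` the second one and
`a_T τ_M ≤ a_M τ_T` do. -/

open Real Set

lemma monotoneOn_Ici_of_hasDerivAt {f f' : ℝ → ℝ} {a : ℝ} (hf : ∀ x, HasDerivAt f (f' x) x)
    (hf' : ∀ x, a < x → 0 ≤ f' x) : MonotoneOn f (Ici a) :=
  monotoneOn_of_hasDerivWithinAt_nonneg (convex_Ici a)
    (fun x _ ↦ (hf x).continuousAt.continuousWithinAt)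
    (fun x _ ↦ (hf x).hasDerivWithinAt) (by rw [interior_Ici]; exact hf')

lemma monotoneOn_div_pow {f f' : ℝ → ℝ} {n : ℕ} (hf : ∀ x, 0 < x → HasDerivAt f (f' x) x)
    (h : ∀ x, 0 < x → n * f x ≤ x * f' x) : MonotoneOn (fun x ↦ f x / x ^ n) (Ioi 0) := by
  refine monotoneOn_of_hasDerivWithinAt_nonneg (convex_Ioi 0) (f' := fun x ↦
      (f' x * x ^ n - f x * (n * x ^ (n - 1))) / (x ^ n) ^ 2) ?_ ?_ ?_
  · exact fun x hx ↦ ((hf x hx).continuousAt.div (continuous_pow n).continuousAt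
      (pow_ne_zero n (ne_of_gt hx))).continuousWithinAt
  · rw [interior_Ioi]
    exact fun x hx ↦ ((hf x hx).div (hasDerivAt_pow n x)
      (pow_ne_zero n (ne_of_gt hx))).hasDerivWithinAt
  · rw [interior_Ioi]
    intro x (hx : 0 < x)
    have hpow : x * (n * x ^ (n - 1)) = n * x ^ n := by
      cases n <;> simp [pow_succ]; ring
    have key : x * (f' x * x ^ n - f x * (n * x ^ (n - 1))) = x ^ n * (x * f' x - n * f x) := by
      linear_combination (-f x) * hpow
    refine div_nonneg (nonneg_of_mul_nonneg_right ?_ hx) (sq_nonneg _)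
    rw [key]
    exact mul_nonneg (pow_nonneg hx.le n) (sub_nonneg.2 (h x hx))

lemma antitoneOn_div_pow {f f' : ℝ → ℝ} {n : ℕ} (hf : ∀ x, 0 < x → HasDerivAt f (f' x) x)
    (h : ∀ x, 0 < x → x * f' x ≤ n * f x) : AntitoneOn (fun x ↦ f x / x ^ n) (Ioi 0) := by
  have := monotoneOn_div_pow (f := -f) (f' := -f') (fun x hx ↦ (hf x hx).neg)
    (fun x hx ↦ by simpa only [Pi.neg_apply, mul_neg, neg_le_neg_iff] using h x hx)
  simpa only [Pi.neg_apply, neg_div, neg_neg] using this.neg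

lemma Upsilon_zero : Upsilon 0 = 0 := by simp [Upsilon]

lemma hasDerivAt_Upsilon (x : ℝ) : HasDerivAt Upsilon (x + exp (-x) - 1) x := by
  have h := ((((hasDerivAt_pow 2 x).div_const 2).sub (hasDerivAt_neg x).exp).sub
    (hasDerivAt_id' x)).add_const 1
  exact h.congr_deriv (by norm_num)

lemma hasDerivAt_Upsilon_deriv (x : ℝ) :
    HasDerivAt (fun x ↦ x + exp (-x) - 1) (1 - exp (-x)) x := by
  simpa [sub_eq_add_neg] using (((hasDerivAt_id x).add (hasDerivAt_neg x).exp).sub_const 1)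

lemma one_add_mul_exp_neg_le_one (x : ℝ) : (1 + x) * exp (-x) ≤ 1 := by
  calc (1 + x) * exp (-x) ≤ exp x * exp (-x) := by
        gcongr; linarith [add_one_le_exp x]
    _ = 1 := by rw [← exp_add, add_neg_cancel, exp_zero]

lemma two_mul_Upsilon_le (x : ℝ) (hx : 0 ≤ x) : 2 * Upsilon x ≤ x * (x + exp (-x) - 1) := by
  have hmono : Monotone fun x ↦ x * (x + exp (-x) - 1) - 2 * Upsilon x := by
    refine monotone_of_hasDerivAt_nonneg
      (fun x ↦ ((hasDerivAt_id x).mul (hasDerivAt_Upsilon_deriv x)).sub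
        ((hasDerivAt_Upsilon x).const_mul 2)) fun x ↦ ?_
    have := one_add_mul_exp_neg_le_one x
    simp only [Pi.zero_apply, id_eq]
    linarith
  have := hmono hx
  simp only [zero_mul, Upsilon_zero, mul_zero, sub_zero] at this
  linarith

lemma mul_le_three_mul_Upsilon (x : ℝ) (hx : 0 ≤ x) : x * (x + exp (-x) - 1) ≤ 3 * Upsilon x := by
  have hmono : MonotoneOn (fun x ↦ 3 * Upsilon x - x * (x + exp (-x) - 1)) (Ici 0) := by
    refine monotoneOn_Ici_of_hasDerivAt
      (fun x ↦ ((hasDerivAt_Upsilon x).const_mul 3).sub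
        ((hasDerivAt_id x).mul (hasDerivAt_Upsilon_deriv x))) fun x hx ↦ ?_
    have := two_mul_Upsilon_le x hx.le
    simp only [id_eq, Upsilon] at this ⊢
    linarith
  have := hmono self_mem_Ici hx hx
  simp only [zero_mul, Upsilon_zero, mul_zero, sub_zero] at this
  linarith

lemma Upsilon_nonneg (x : ℝ) (hx : 0 ≤ x) : 0 ≤ Upsilon x := by
  have := mul_le_three_mul_Upsilon x hx
  have := mul_nonneg hx (by linarith [add_one_le_exp (-x)] : 0 ≤ x + exp (-x) - 1)
  linarith

lemma monotoneOn_Upsilon_div_sq : MonotoneOn (fun x ↦ Upsilon x / x ^ 2) (Ioi 0) :=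
  monotoneOn_div_pow (fun x _ ↦ hasDerivAt_Upsilon x)
    (fun x hx ↦ by exact_mod_cast two_mul_Upsilon_le x hx.le)

lemma antitoneOn_Upsilon_div_cube : AntitoneOn (fun x ↦ Upsilon x / x ^ 3) (Ioi 0) :=
  antitoneOn_div_pow (fun x _ ↦ hasDerivAt_Upsilon x)
    (fun x hx ↦ by exact_mod_cast mul_le_three_mul_Upsilon x hx.le)

lemma pow_mul_apply_div {f : ℝ → ℝ} (n : ℕ) {t τ : ℝ} (ht : t ≠ 0) (hτ : τ ≠ 0) :
    τ ^ n * f (t / τ) = t ^ n * (f (t / τ) / (t / τ) ^ n) := by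
  rw [div_pow]
  field_simp

lemma antitoneOn_sq_mul_Upsilon_div {t : ℝ} (ht : 0 < t) :
    AntitoneOn (fun τ ↦ τ ^ 2 * Upsilon (t / τ)) (Ioi 0) := by
  intro σ (hσ : 0 < σ) τ (hτ : 0 < τ) hστ
  simp only [pow_mul_apply_div 2 ht.ne' hσ.ne', pow_mul_apply_div 2 ht.ne' hτ.ne']
  gcongr _ * ?_
  exact monotoneOn_Upsilon_div_sq (div_pos ht hτ) (div_pos ht hσ)
    (div_le_div_of_nonneg_left ht.le hσ hστ)

lemma monotoneOn_cube_mul_Upsilon_div {t : ℝ} (ht : 0 < t) :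
    MonotoneOn (fun τ ↦ τ ^ 3 * Upsilon (t / τ)) (Ioi 0) := by
  intro σ (hσ : 0 < σ) τ (hτ : 0 < τ) hστ
  simp only [pow_mul_apply_div 3 ht.ne' hσ.ne', pow_mul_apply_div 3 ht.ne' hτ.ne']
  gcongr _ * ?_
  exact antitoneOn_Upsilon_div_cube (div_pos ht hτ) (div_pos ht hσ)
    (div_le_div_of_nonneg_left ht.le hσ hστ)

/-- If the pursuer has maneuverability superiority (a_M ≥ a_T > 0) and agility
superiority (a_M·τ_T ≥ a_T·τ_M), then the singular-region boundary is nonnegative for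
all t ≥ 0: ∂Z*(t) = a_M·τ_M²·Υ(t/τ_M) − a_T·τ_T²·Υ(t/τ_T) ≥ 0. -/
theorem singBdry_nonneg
    (τM τT aM aT : ℝ) (hτM : 0 < τM) (hτT : 0 < τT)
    (haT : 0 < aT) (haM : aT ≤ aM) (hagil : aT * τM ≤ aM * τT) :
    ∀ t : ℝ, 0 ≤ t → 0 ≤ singBdry aM aT τM τT t := by
  intro t ht
  rcases ht.eq_or_lt with rfl | ht
  · simp [singBdry, Upsilon_zero]
  have hΥM := Upsilon_nonneg (t / τM) (div_pos ht hτM).le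
  rw [singBdry, sub_nonneg]
  rcases le_total τM τT with hτ | hτ
  · calc aT * τT ^ 2 * Upsilon (t / τT) ≤ aT * (τM ^ 2 * Upsilon (t / τM)) := by
          rw [mul_assoc]
          exact mul_le_mul_of_nonneg_left
            (antitoneOn_sq_mul_Upsilon_div ht hτM hτT hτ) haT.le
      _ ≤ aM * τM ^ 2 * Upsilon (t / τM) := by
          rw [← mul_assoc]; gcongr
  · calc aT * τT ^ 2 * Upsilon (t / τT) = aT / τT * (τT ^ 3 * Upsilon (t / τT)) := by
          field_simp
      _ ≤ aT / τT * (τM ^ 3 * Upsilon (t / τM)) :=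
          mul_le_mul_of_nonneg_left (monotoneOn_cube_mul_Upsilon_div ht hτT hτM hτ)
            (div_pos haT hτT).le
      _ = aT * τM / τT * (τM ^ 2 * Upsilon (t / τM)) := by ring
      _ ≤ aM * τM ^ 2 * Upsilon (t / τM) := by
          rw [mul_assoc]
          gcongr
          rwa [div_le_iff₀ hτT]
end

section
/- Let τ_M > 0, τ_T > 0 and a_M ≥ a_T > 0 with a_M·τ_T ≥ a_T·τ_M. Then for every t ≥ 0 one has a_M·τ_M·Ψ(t/τ_M) ≥ a_T·τ_T·Ψ(t/τ_T), where Ψ(θ) = exp(−θ) + θ − 1; consequently the singular-region boundary t ↦ ∂Z*(t) = a_M·τ_M²·Υ(t/τ_M) − a_T·τ_T²·Υ(t/τ_T), whose derivative at t is a_M·τ_M·Ψ(t/τ_M) − a_T·τ_T·Ψ(t/τ_T), is monotone nondecreasing on [0, ∞). -/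
/-- Ψ(θ) = exp(−θ) + θ − 1 -/
noncomputable def Psi (θ : ℝ) : ℝ := Real.exp (-θ) + θ - 1

/-!
Υ' = Ψ and Ψ'(θ) = 1 − e^{−θ}, so ∂Z*' = a_M τ_M Ψ(t/τ_M) − a_T τ_T Ψ(t/τ_T), which vanishes at
`t = 0` and whose own derivative is a_M (1 − e^{−t/τ_M}) − a_T (1 − e^{−t/τ_T}). The latter is
nonnegative: since θ ↦ 1 − e^{−θ} is increasing and concave with value 0 at 0, the quantity
1 − e^{−t/τ} decreases in τ while τ (1 − e^{−t/τ}) increases in τ. If τ_M ≤ τ_T the first fact and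
a_T ≤ a_M suffice; if τ_T ≤ τ_M the second fact and a_T τ_M ≤ a_M τ_T do.
-/

open Real Set

lemma psi_zero : Psi 0 = 0 := by
  simp [Psi]

lemma hasDerivAt_psi (θ : ℝ) : HasDerivAt Psi (1 - exp (-θ)) θ :=
  ((((hasDerivAt_neg θ).exp).add (hasDerivAt_id θ)).sub_const 1).congr_deriv (by ring)

lemma hasDerivAt_upsilon (θ : ℝ) : HasDerivAt Upsilon (Psi θ) θ :=
  (((((hasDerivAt_pow 2 θ).div_const 2).sub (hasDerivAt_neg θ).exp).sub
    (hasDerivAt_id θ)).add_const 1).congr_deriv (by simp [Psi]; ring)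

lemma HasDerivAt.mul_comp_div {f f' : ℝ → ℝ} (hf : ∀ θ, HasDerivAt f (f' θ) θ) {τ : ℝ}
    (hτ : τ ≠ 0) (t : ℝ) : HasDerivAt (fun s => τ * f (s / τ)) (f' (t / τ)) t :=
  (((hf (t / τ)).comp t ((hasDerivAt_id t).div_const τ)).const_mul τ).congr_deriv (by field_simp)

lemma monotoneOn_Ici_of_hasDerivAt_nonneg {f f' : ℝ → ℝ} {a : ℝ}
    (hf : ∀ t, HasDerivAt f (f' t) t) (hf' : ∀ t, a < t → 0 ≤ f' t) : MonotoneOn f (Ici a) :=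
  monotoneOn_of_hasDerivWithinAt_nonneg (convex_Ici a)
    (fun t _ => (hf t).continuousAt.continuousWithinAt)
    (fun t _ => (hf t).hasDerivWithinAt) (fun t ht => hf' t (by simpa using ht))

lemma one_sub_exp_neg_nonneg {θ : ℝ} (hθ : 0 ≤ θ) : 0 ≤ 1 - exp (-θ) := by
  simpa using exp_le_one_iff.2 (neg_nonpos.2 hθ)

lemma antitoneOn_one_sub_exp_neg_div {t : ℝ} (ht : 0 ≤ t) :
    AntitoneOn (fun τ => 1 - exp (-(t / τ))) (Ioi 0) := fun _ hτ _ _ hle =>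
  sub_le_sub_left (exp_le_exp.2 (neg_le_neg (div_le_div_of_nonneg_left ht hτ hle))) 1

lemma monotoneOn_mul_one_sub_exp_neg_div {t : ℝ} (ht : 0 ≤ t) :
    MonotoneOn (fun τ => τ * (1 - exp (-(t / τ)))) (Ioi 0) := by
  rintro τ (hτ : 0 < τ) τ' (hτ' : 0 < τ') hle
  rcases ht.eq_or_lt with rfl | ht
  · simp
  -- slopes of `exp` on the chords ending at 0 increase with the left endpoint
  have hslope := convexOn_exp.secant_mono (a := 0) (mem_univ _) (mem_univ _) (mem_univ _)
    (neg_ne_zero.2 (by positivity)) (neg_ne_zero.2 (by positivity))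
    (neg_le_neg (div_le_div_of_nonneg_left ht.le hτ hle))
  have e : ∀ σ : ℝ, 0 < σ →
      (exp (-(t / σ)) - exp 0) / (-(t / σ) - 0) = σ * (1 - exp (-(t / σ))) / t :=
    fun σ hσ => by rw [exp_zero]; field_simp [ht.ne']; ring
  rw [e τ hτ, e τ' hτ', div_le_div_iff_of_pos_right ht] at hslope
  exact hslope

lemma mul_one_sub_exp_neg_div_le {τM τT aM aT t : ℝ} (hτM : 0 < τM) (hτT : 0 < τT)
    (haT : 0 < aT) (haM : aT ≤ aM) (hagil : aT * τM ≤ aM * τT) (ht : 0 ≤ t) :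
    aT * (1 - exp (-(t / τT))) ≤ aM * (1 - exp (-(t / τM))) := by
  have hφM := one_sub_exp_neg_nonneg (div_nonneg ht hτM.le)
  rcases le_total τM τT with hle | hle
  · exact mul_le_mul haM (antitoneOn_one_sub_exp_neg_div ht hτM hτT hle)
      (one_sub_exp_neg_nonneg (div_nonneg ht hτT.le)) (haT.le.trans haM)
  · have hτφ := monotoneOn_mul_one_sub_exp_neg_div ht hτT hτM hle
    refine le_of_mul_le_mul_left ?_ hτT
    calc τT * (aT * (1 - exp (-(t / τT)))) = aT * (τT * (1 - exp (-(t / τT)))) := by ring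
      _ ≤ aT * (τM * (1 - exp (-(t / τM)))) := mul_le_mul_of_nonneg_left hτφ haT.le
      _ = aT * τM * (1 - exp (-(t / τM))) := by ring
      _ ≤ aM * τT * (1 - exp (-(t / τM))) := mul_le_mul_of_nonneg_right hagil hφM
      _ = τT * (aM * (1 - exp (-(t / τM)))) := by ring

/-- Under maneuverability (a_M ≥ a_T > 0) and agility (a_M·τ_T ≥ a_T·τ_M) superiority,
a_M·τ_M·Ψ(t/τ_M) ≥ a_T·τ_T·Ψ(t/τ_T) for every t ≥ 0; consequently the singular-region
boundary t ↦ ∂Z*(t), whose derivative at t equals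
a_M·τ_M·Ψ(t/τ_M) − a_T·τ_T·Ψ(t/τ_T), is monotone nondecreasing on [0, ∞). -/
theorem singBdry_monotone
    (τM τT aM aT : ℝ) (hτM : 0 < τM) (hτT : 0 < τT)
    (haT : 0 < aT) (haM : aT ≤ aM) (hagil : aT * τM ≤ aM * τT) :
    (∀ t : ℝ, 0 ≤ t → aT * τT * Psi (t / τT) ≤ aM * τM * Psi (t / τM)) ∧
    (∀ t : ℝ, HasDerivAt (fun s => singBdry aM aT τM τT s)
      (aM * τM * Psi (t / τM) - aT * τT * Psi (t / τT)) t) ∧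
    MonotoneOn (fun s => singBdry aM aT τM τT s) (Set.Ici (0 : ℝ)) := by
  have hψ (τ : ℝ) (hτ : τ ≠ 0) := HasDerivAt.mul_comp_div hasDerivAt_psi hτ
  have hυ (τ : ℝ) (hτ : τ ≠ 0) := HasDerivAt.mul_comp_div hasDerivAt_upsilon hτ
  have hgap : MonotoneOn (fun s => aM * (τM * Psi (s / τM)) - aT * (τT * Psi (s / τT))) (Ici 0) :=
    monotoneOn_Ici_of_hasDerivAt_nonneg
      (fun t => ((hψ τM hτM.ne' t).const_mul aM).sub ((hψ τT hτT.ne' t).const_mul aT))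
      (fun t ht => sub_nonneg.2 (mul_one_sub_exp_neg_div_le hτM hτT haT haM hagil ht.le))
  have hΨ (t : ℝ) (ht : 0 ≤ t) : aT * τT * Psi (t / τT) ≤ aM * τM * Psi (t / τM) := by
    have := hgap self_mem_Ici ht ht
    simp only [zero_div, psi_zero, mul_zero, sub_zero] at this
    linarith
  have hderiv (t : ℝ) : HasDerivAt (fun s => singBdry aM aT τM τT s)
      (aM * τM * Psi (t / τM) - aT * τT * Psi (t / τT)) t := by
    refine (((hυ τM hτM.ne' t).const_mul (aM * τM)).sub
      ((hυ τT hτT.ne' t).const_mul (aT * τT))).congr_of_eventuallyEq (.of_forall fun s => ?_)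
    simp only [singBdry, Pi.sub_apply]
    ring
  exact ⟨hΨ, hderiv, monotoneOn_Ici_of_hasDerivAt_nonneg hderiv
    fun t ht => sub_nonneg.2 (hΨ t ht.le)⟩
end
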